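/- There exists a Las Vegas one-way probabilistic one-counter automaton (Las Vegas 1P1CA) over the alphabet {a,b,c,d} that solves the promise problem ONE-NONE with success probability 1/3: every yes-instance (a string in ONE·NONE) is accepted with probability at least 1/3 and rejected with probability 0, and every no-instance (a string in NONE·ONE) is rejected with probability at least 1/3 and accepted with probability 0. -/

import Mathlib

/-- Input symbols extended with the left (`cent`) and right (`dollar`) end-markers. -/
inductive TSym (α : Type) : Type
  | cent : TSym α
  | letter : α → TSym α
  | dollar : TSym α

/-- The tape content `¢ w $` for an input word `w`. -/
def tagged {α : Type} (w : List α) : List (TSym α) :=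
  TSym.cent :: (w.map TSym.letter ++ [TSym.dollar])

/-- The three kinds of states of a Las Vegas automaton. -/
inductive LVDec : Type
  | acc : LVDec
  | rej : LVDec
  | unk : LVDec
deriving DecidableEq

/-- A Las Vegas one-way probabilistic one-counter automaton: the states are
partitioned into accepting, rejecting and neutral states via `lvdec`. -/
structure LasVegas1P1CA (α : Type) where
  Q : Type
  [fintypeQ : Fintype Q]
  [decQ : DecidableEq Q]
  q0 : Q
  lvdec : Q → LVDec
  m : ℕ
  δ : Q → TSym α → Bool → Q → ℤ → ℝ
  nonneg : ∀ q σ z q' c, 0 ≤ δ q σ z q' c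
  support : ∀ q σ z q' c, δ q σ z q' c ≠ 0 → |c| ≤ (m : ℤ)
  total : ∀ q σ z, (∑ q' : Q, ∑ c ∈ Finset.Icc (-(m : ℤ)) (m : ℤ), δ q σ z q' c) = 1

attribute [instance] LasVegas1P1CA.fintypeQ LasVegas1P1CA.decQ

namespace LasVegas1P1CA

variable {α : Type} (M : LasVegas1P1CA α)

/-- One step of the evolution of the probability distribution over configurations. -/
noncomputable def stepD (μ : M.Q × ℤ → ℝ) (σ : TSym α) : M.Q × ℤ → ℝ :=
  fun p' => ∑ q : M.Q, ∑ c ∈ Finset.Icc (-(M.m : ℤ)) (M.m : ℤ),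
    μ (q, p'.2 - c) * M.δ q σ (decide (p'.2 - c = 0)) p'.1 c

/-- Initial distribution: point mass on `(q0, 0)`. -/
def initD : M.Q × ℤ → ℝ := fun p => if p = (M.q0, 0) then 1 else 0

/-- Distribution over configurations after reading `¢ w $`. -/
noncomputable def finalD (w : List α) : M.Q × ℤ → ℝ := (tagged w).foldl M.stepD M.initD

/-- Total probability of computation paths ending in an accepting state. -/
noncomputable def accProb (w : List α) : ℝ :=
  ∑' p : M.Q × ℤ, if M.lvdec p.1 = LVDec.acc then M.finalD w p else 0

/-- Total probability of computation paths ending in a rejecting state. -/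
noncomputable def rejProb (w : List α) : ℝ :=
  ∑' p : M.Q × ℤ, if M.lvdec p.1 = LVDec.rej then M.finalD w p else 0

end LasVegas1P1CA

/-- The alphabet `{a, b, c, d}`. -/
inductive ΓN : Type
  | a : ΓN
  | b : ΓN
  | c : ΓN
  | d : ΓN
deriving DecidableEq

/-- Exactly one of three propositions holds. -/
def exactlyOne (P Q R : Prop) : Prop :=
  (P ∧ ¬Q ∧ ¬R) ∨ (¬P ∧ Q ∧ ¬R) ∨ (¬P ∧ ¬Q ∧ R)

/-- `#_a(u) = #_b(u)`. -/
def eqAB (u : List ΓN) : Prop := u.count ΓN.a = u.count ΓN.b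
/-- `#_b(u) = #_c(u)`. -/
def eqBC (u : List ΓN) : Prop := u.count ΓN.b = u.count ΓN.c
/-- `#_c(u) = #_a(u)`. -/
def eqCA (u : List ΓN) : Prop := u.count ΓN.c = u.count ΓN.a

/-- The language `ONE`: strings `u ++ y` with `u ∈ {a,b,c}*`, `y ∈ {d}*`,
`|y| ≥ |u|`, and exactly one of the three count equalities holding for `u`. -/
def ONE : Language ΓN :=
  {w | ∃ u y : List ΓN, w = u ++ y ∧ (∀ x ∈ u, x ≠ ΓN.d) ∧ (∀ x ∈ y, x = ΓN.d) ∧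
    u.length ≤ y.length ∧ exactlyOne (eqAB u) (eqBC u) (eqCA u)}

/-- The language `NONE`: as `ONE`, but none of the three count equalities holds. -/
def NONE : Language ΓN :=
  {w | ∃ u y : List ΓN, w = u ++ y ∧ (∀ x ∈ u, x ≠ ΓN.d) ∧ (∀ x ∈ y, x = ΓN.d) ∧
    u.length ≤ y.length ∧ ¬ eqAB u ∧ ¬ eqBC u ∧ ¬ eqCA u}

/-!
On reading `¢` the automaton picks one of the three equalities `#a = #b`, `#b = #c`, `#c = #a`
uniformly at random. The chosen branch keeps the difference of the two counts over the first
`{a,b,c}`-block `u₁` in its counter, remembering its sign in the state, tests it for zero at the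
first `d`, and spends the `|y₁| ≥ |u₁|` letters `d` on bringing the counter back to zero. It then
zero-tests the difference over `u₂` at the first `d` of `y₂`, accepts if only the first test
succeeded and rejects if only the second did. On `ONE · NONE` exactly one branch accepts and none
rejects, and symmetrically on `NONE · ONE`.
-/

namespace LasVegas1P1CA

variable {α : Type} (M : LasVegas1P1CA α)

lemma initD_eq_single : M.initD = Pi.single (M.q0, 0) 1 := by
  funext p
  simp [initD, Pi.single_apply]

lemma stepD_sum {ι : Type} (s : Finset ι) (μ : ι → M.Q × ℤ → ℝ) (σ : TSym α) :
    M.stepD (∑ i ∈ s, μ i) σ = ∑ i ∈ s, M.stepD (μ i) σ := by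
  funext p
  simp only [stepD, Finset.sum_apply, Finset.sum_mul]
  rw [eq_comm, Finset.sum_comm]
  exact Finset.sum_congr rfl fun q _ => Finset.sum_comm

lemma foldl_stepD_sum {ι : Type} (s : Finset ι) (μ : ι → M.Q × ℤ → ℝ) (l : List (TSym α)) :
    l.foldl M.stepD (∑ i ∈ s, μ i) = ∑ i ∈ s, l.foldl M.stepD (μ i) := by
  induction l generalizing μ with
  | nil => rfl
  | cons σ l ih => simp only [List.foldl_cons, stepD_sum, ih]

lemma stepD_single (x : M.Q × ℤ) (a : ℝ) (σ : TSym α) (p : M.Q × ℤ) :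
    M.stepD (Pi.single x a) σ p = a * M.δ x.1 σ (decide (x.2 = 0)) p.1 (p.2 - x.2) := by
  obtain ⟨q, n⟩ := x
  have hsupp : p.2 - n ∉ Finset.Icc (-(M.m : ℤ)) M.m → M.δ q σ (decide (n = 0)) p.1 (p.2 - n) = 0 :=
    fun h => by_contra fun h' => h (Finset.mem_Icc.2 (abs_le.1 (M.support _ _ _ _ _ h')))
  have hc : ∀ c, p.2 - c = n ↔ c = p.2 - n := by omega
  simp only [stepD, Pi.single_apply, Prod.mk.injEq, hc, ite_and, ite_mul, zero_mul]
  rw [Finset.sum_eq_single_of_mem q (Finset.mem_univ _) fun b _ hb => by simp [hb]]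
  simp only [↓reduceIte, Finset.sum_ite_eq', sub_sub_cancel]
  split_ifs with h
  · rfl
  · rw [hsupp h, mul_zero]

end LasVegas1P1CA

lemma tsum_ite_sum_single {β ι : Type} [DecidableEq β] (P : β → Prop) [DecidablePred P]
    (s : Finset ι) (x : ι → β) (a : ι → ℝ) :
    ∑' b, (if P b then (∑ i ∈ s, Pi.single (x i) (a i) : β → ℝ) b else 0)
      = ∑ i ∈ s, if P (x i) then a i else 0 := by
  have hsingle : ∀ b, (if P b then (∑ i ∈ s, Pi.single (x i) (a i) : β → ℝ) b else 0)
      = ∑ i ∈ s, (Pi.single (x i) (if P (x i) then a i else 0) : β → ℝ) b := by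
    intro b
    simp only [Finset.sum_apply, Pi.single_apply]
    split_ifs with hb
    · exact Finset.sum_congr rfl fun i _ => by split_ifs <;> simp_all
    · exact (Finset.sum_eq_zero fun i _ => by split_ifs <;> simp_all).symm
  simp_rw [hsingle]
  rw [Summable.tsum_finsetSum fun i _ => (hasSum_pi_single _ _).summable]
  simp only [tsum_pi_single]

structure DetOneCounter (α : Type) where
  S : Type
  [fintypeS : Fintype S]
  [decS : DecidableEq S]
  step : S → TSym α → Bool → S × ℤ
  m : ℕ
  abs_step_le : ∀ s σ z, |(step s σ z).2| ≤ m
  verdict : S → LVDec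

attribute [instance] DetOneCounter.fintypeS DetOneCounter.decS

namespace DetOneCounter

variable {α : Type} (A : DetOneCounter α)

def stepConfig (x : A.S × ℤ) (σ : TSym α) : A.S × ℤ :=
  ((A.step x.1 σ (decide (x.2 = 0))).1, x.2 + (A.step x.1 σ (decide (x.2 = 0))).2)

def run (x : A.S × ℤ) (l : List (TSym α)) : A.S × ℤ := l.foldl A.stepConfig x

@[simp] lemma run_nil (x : A.S × ℤ) : A.run x [] = x := rfl

@[simp] lemma run_cons (x : A.S × ℤ) (σ : TSym α) (l : List (TSym α)) :
    A.run x (σ :: l) = A.run (A.stepConfig x σ) l := rfl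

lemma run_append (x : A.S × ℤ) (l₁ l₂ : List (TSym α)) :
    A.run x (l₁ ++ l₂) = A.run (A.run x l₁) l₂ := List.foldl_append ..

/-- From the extra initial state `none`, reading the end-marker `¢` draws a start state of `A`
from `ν`; from then on `A` runs deterministically. -/
def randomStartδ (ν : A.S → ℝ) : Option A.S → TSym α → Bool → Option A.S → ℤ → ℝ
  | none, _, _, some s', c => if c = 0 then ν s' else 0
  | some s, σ, z, some s', c => if (s', c) = A.step s σ z then 1 else 0
  | _, _, _, none, _ => 0

noncomputable abbrev randomStart (ν : A.S → ℝ) (hν : ν ∈ stdSimplex ℝ A.S) : LasVegas1P1CA α where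
  Q := Option A.S
  q0 := none
  lvdec q := q.elim .unk A.verdict
  m := A.m
  δ := A.randomStartδ ν
  nonneg := by
    rintro (_ | s) σ z (_ | s') c <;> simp only [randomStartδ] <;> (try split_ifs) <;>
      first | exact le_rfl | exact zero_le_one | exact hν.1 s'
  support := by
    rintro (_ | s) σ z (_ | s') c h <;> simp only [randomStartδ, ne_eq, not_true_eq_false] at h <;>
      split_ifs at h with hc <;> try exact absurd rfl h
    · simp [hc]
    · rw [show c = (A.step s σ z).2 from congrArg Prod.snd hc]
      exact A.abs_step_le s σ z
  total := by
    rintro (_ | s) σ z <;> simp only [Fintype.sum_option, randomStartδ, Finset.sum_const_zero,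
      zero_add]
    · simp [Finset.sum_ite_eq', hν.2]
    · rw [← Finset.sum_product']
      simp only [Prod.mk.eta, Finset.sum_ite_eq', Finset.mem_product, Finset.mem_univ, true_and,
        Finset.mem_Icc, ← abs_le, A.abs_step_le, if_true]

section randomStart

variable {ν : A.S → ℝ} (hν : ν ∈ stdSimplex ℝ A.S)

lemma randomStart_stepD_initD (σ : TSym α) :
    (A.randomStart ν hν).stepD (A.randomStart ν hν).initD σ = ∑ s, Pi.single (some s, 0) (ν s) := by
  rw [LasVegas1P1CA.initD_eq_single]
  funext p
  obtain ⟨_ | s', n⟩ := p <;> rw [LasVegas1P1CA.stepD_single]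
  · simp [randomStartδ]
  · simp [randomStartδ, Finset.sum_apply, Pi.single_apply, ite_and, Finset.sum_ite_eq]

lemma randomStart_stepD_single (x : A.S × ℤ) (a : ℝ) (σ : TSym α) :
    (A.randomStart ν hν).stepD (Pi.single (Prod.map some id x) a) σ
      = Pi.single (Prod.map some id (A.stepConfig x σ)) a := by
  obtain ⟨s, k⟩ := x
  funext p
  obtain ⟨_ | s', n⟩ := p <;> rw [LasVegas1P1CA.stepD_single]
  · simp [randomStartδ, Prod.ext_iff]
  · simp [randomStartδ, stepConfig, Pi.single_apply, Prod.ext_iff, sub_eq_iff_eq_add']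

lemma randomStart_foldl_single (x : A.S × ℤ) (a : ℝ) (l : List (TSym α)) :
    l.foldl (A.randomStart ν hν).stepD (Pi.single (Prod.map some id x) a)
      = Pi.single (Prod.map some id (A.run x l)) a := by
  induction l generalizing x with
  | nil => rfl
  | cons σ l ih => rw [List.foldl_cons, randomStart_stepD_single, ih, run_cons]

lemma randomStart_finalD (w : List α) :
    (A.randomStart ν hν).finalD w
      = ∑ s, Pi.single (Prod.map some id (A.run (s, 0) (w.map TSym.letter ++ [TSym.dollar])))
          (ν s) := by
  rw [LasVegas1P1CA.finalD, tagged, List.foldl_cons, randomStart_stepD_initD,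
    LasVegas1P1CA.foldl_stepD_sum]
  exact Finset.sum_congr rfl fun s _ => A.randomStart_foldl_single hν (s, 0) (ν s) _

lemma randomStart_tsum_verdict (v : LVDec) (w : List α) :
    ∑' p : Option A.S × ℤ,
        (if (A.randomStart ν hν).lvdec p.1 = v then (A.randomStart ν hν).finalD w p else 0)
      = ∑ s, if A.verdict (A.run (s, 0) (w.map TSym.letter ++ [TSym.dollar])).1 = v
          then ν s else 0 := by
  rw [randomStart_finalD]
  exact tsum_ite_sum_single (fun p : Option A.S × ℤ => p.1.elim .unk A.verdict = v) _ _ _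

end randomStart

end DetOneCounter

namespace OneNone

inductive Pair : Type
  | ab | bc | ca
deriving DecidableEq

namespace Pair

instance : Fintype Pair := ⟨{ab, bc, ca}, fun p => by cases p <;> decide⟩

def left : Pair → ΓN
  | ab => .a | bc => .b | ca => .c

def right : Pair → ΓN
  | ab => .b | bc => .c | ca => .a

def Holds : Pair → List ΓN → Prop
  | ab => eqAB | bc => eqBC | ca => eqCA

lemma holds_iff (p : Pair) (u : List ΓN) : p.Holds u ↔ u.count p.left = u.count p.right := by
  cases p <;> rfl

lemma sum_univ (f : Pair → ℝ) : ∑ p, f p = f ab + f bc + f ca := by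
  rw [show (Finset.univ : Finset Pair) = {ab, bc, ca} from rfl, Finset.sum_insert (by decide),
    Finset.sum_pair (by decide), add_assoc]

end Pair

def weight (p : Pair) (x : ΓN) : ℤ :=
  (if x = p.left then 1 else 0) - (if x = p.right then 1 else 0)

lemma abs_weight_le_one (p : Pair) (x : ΓN) : |weight p x| ≤ 1 := by
  cases p <;> cases x <;> decide

def imbalance (p : Pair) (u : List ΓN) : ℤ := (u.map (weight p)).sum

@[simp] lemma imbalance_nil (p : Pair) : imbalance p [] = 0 := rfl

@[simp] lemma imbalance_cons (p : Pair) (x : ΓN) (u : List ΓN) :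
    imbalance p (x :: u) = weight p x + imbalance p u := rfl

lemma imbalance_eq_count_sub_count (p : Pair) (u : List ΓN) :
    imbalance p u = u.count p.left - u.count p.right := by
  induction u with
  | nil => simp
  | cons x u ih =>
    simp only [imbalance_cons, ih, weight, List.count_cons, beq_iff_eq]
    push_cast
    ring

lemma imbalance_eq_zero_iff (p : Pair) (u : List ΓN) : imbalance p u = 0 ↔ p.Holds u := by
  rw [imbalance_eq_count_sub_count, p.holds_iff]
  omega

lemma abs_imbalance_le_length (p : Pair) (u : List ΓN) : |imbalance p u| ≤ u.length := by
  induction u with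
  | nil => simp
  | cons x u ih =>
    rw [imbalance_cons, List.length_cons, Nat.cast_succ, add_comm (u.length : ℤ)]
    exact (abs_add_le _ _).trans (add_le_add (abs_weight_le_one p x) ih)

def lvVerdict : Bool → Bool → LVDec
  | true, false => .acc
  | false, true => .rej
  | _, _ => .unk

/-- `pos` is the sign of the counter whenever it is nonzero; `e₁`, `e₂` are the zero tests
at the first `d` after the first and the second `{a,b,c}`-block. -/
inductive Phase : Type
  | first (pos : Bool)
  | drain (e₁ pos : Bool)
  | second (e₁ : Bool)
  | halt (e₁ e₂ : Bool)
deriving DecidableEq, Fintype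

def towardZero (z pos : Bool) : ℤ := if z then 0 else if pos then -1 else 1

def branchStep (p : Pair) : Phase → TSym ΓN → Bool → Phase × ℤ
  | .first pos, .letter .d, z => (.drain z pos, towardZero z pos)
  | .first pos, .letter x, z => (.first (if z then decide (0 < weight p x) else pos), weight p x)
  | .drain e₁ pos, .letter .d, z => (.drain e₁ pos, towardZero z pos)
  | .drain e₁ _, .letter x, _ => (.second e₁, weight p x)
  | .second e₁, .letter .d, z => (.halt e₁ z, 0)
  | .second e₁, .letter x, _ => (.second e₁, weight p x)
  | φ, _, _ => (φ, 0)

lemma abs_branchStep_le (p : Pair) (φ : Phase) (σ : TSym ΓN) (z : Bool) :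
    |(branchStep p φ σ z).2| ≤ 1 := by
  rcases φ with pos | ⟨e₁, pos⟩ | e₁ | ⟨e₁, e₂⟩ <;> rcases σ with _ | x | _ <;>
    (try cases x) <;> (try cases pos) <;> cases z <;>
    simp [branchStep, towardZero, abs_weight_le_one]

abbrev automaton : DetOneCounter ΓN where
  S := Pair × Phase
  step s σ z := ((s.1, (branchStep s.1 s.2 σ z).1), (branchStep s.1 s.2 σ z).2)
  m := 1
  abs_step_le s σ z := by simpa using abs_branchStep_le s.1 s.2 σ z
  verdict s := match s.2 with
    | .halt e₁ e₂ => lvVerdict e₁ e₂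
    | _ => .unk

def SignCorrect (pos : Bool) (n : ℤ) : Prop := n ≠ 0 → pos = decide (0 < n)

lemma signCorrect_zero (pos : Bool) : SignCorrect pos 0 := fun h => absurd rfl h

lemma SignCorrect.add {pos : Bool} {n w : ℤ} (h : SignCorrect pos n) (hw : |w| ≤ 1) :
    SignCorrect (if decide (n = 0) then decide (0 < w) else pos) (n + w) := by
  intro hnw
  rw [abs_le] at hw
  by_cases hn : n = 0
  · simp [hn]
  · simp only [hn, decide_false, Bool.false_eq_true, if_false, h hn, decide_eq_decide]
    omega

lemma SignCorrect.add_towardZero {pos : Bool} {n : ℤ} {k : ℕ} (h : SignCorrect pos n)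
    (hn : |n| ≤ k + 1) :
    SignCorrect pos (n + towardZero (decide (n = 0)) pos) ∧
      |n + towardZero (decide (n = 0)) pos| ≤ k := by
  rw [abs_le] at hn ⊢
  by_cases h0 : n = 0
  · subst h0
    simp [towardZero, signCorrect_zero]
  · have := h h0
    unfold towardZero SignCorrect
    cases pos <;> simp_all <;> omega

variable (p : Pair)

lemma run_first {u : List ΓN} (hu : ∀ x ∈ u, x ≠ .d) {pos : Bool} {n : ℤ} (h : SignCorrect pos n) :
    ∃ pos', automaton.run ((p, .first pos), n) (u.map .letter)
      = ((p, .first pos'), n + imbalance p u) ∧ SignCorrect pos' (n + imbalance p u) := by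
  induction u generalizing pos n with
  | nil => exact ⟨pos, by simp, by simpa using h⟩
  | cons x u ih =>
    obtain ⟨pos', hrun, h'⟩ := ih (fun y hy => hu y (List.mem_cons_of_mem x hy))
      (h.add (abs_weight_le_one p x))
    have hstep : automaton.stepConfig ((p, .first pos), n) (.letter x)
        = ((p, .first (if decide (n = 0) then decide (0 < weight p x) else pos)),
            n + weight p x) := by
      cases x <;> first | exact absurd rfl (hu _ List.mem_cons_self) | rfl
    rw [imbalance_cons, ← add_assoc]
    exact ⟨pos', by rw [List.map_cons, DetOneCounter.run_cons, hstep, hrun], h'⟩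

lemma run_drain (e₁ : Bool) (k : ℕ) {pos : Bool} {n : ℤ} (h : SignCorrect pos n) (hn : |n| ≤ k) :
    automaton.run ((p, .drain e₁ pos), n) (List.replicate k (.letter .d))
      = ((p, .drain e₁ pos), 0) := by
  induction k generalizing n with
  | zero =>
    obtain rfl : n = 0 := by simpa using hn
    rfl
  | succ k ih =>
    obtain ⟨h', hn'⟩ := h.add_towardZero (by simpa using hn)
    exact ih h' hn'

lemma run_second (e₁ : Bool) {u : List ΓN} (hu : ∀ x ∈ u, x ≠ .d) (n : ℤ) :
    automaton.run ((p, .second e₁), n) (u.map .letter) = ((p, .second e₁), n + imbalance p u) := by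
  induction u generalizing n with
  | nil => simp
  | cons x u ih =>
    have hstep : automaton.stepConfig ((p, .second e₁), n) (.letter x)
        = ((p, .second e₁), n + weight p x) := by
      cases x <;> first | exact absurd rfl (hu _ List.mem_cons_self) | rfl
    rw [List.map_cons, DetOneCounter.run_cons, hstep,
      ih (fun y hy => hu y (List.mem_cons_of_mem x hy)), imbalance_cons, add_assoc]

lemma run_halt (e₁ e₂ : Bool) (n : ℤ) (l : List (TSym ΓN)) :
    automaton.run ((p, .halt e₁ e₂), n) l = ((p, .halt e₁ e₂), n) := by
  induction l with
  | nil => rfl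
  | cons σ l ih =>
    have hstep : automaton.stepConfig ((p, .halt e₁ e₂), n) σ = ((p, .halt e₁ e₂), n) := by
      rcases σ with _ | x | _ <;> (try cases x) <;>
        simp [automaton, DetOneCounter.stepConfig, branchStep]
    rw [DetOneCounter.run_cons, hstep, ih]

lemma run_first_replicate_d (pos : Bool) (n : ℤ) (k : ℕ) :
    automaton.run ((p, .first pos), n) (List.replicate (k + 1) (.letter .d))
      = automaton.run ((p, .drain (decide (n = 0)) pos), n) (List.replicate (k + 1) (.letter .d)) :=
  rfl

lemma run_second_d (e₁ : Bool) (n : ℤ) (l : List (TSym ΓN)) :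
    automaton.run ((p, .second e₁), n) (.letter .d :: l)
      = automaton.run ((p, .halt e₁ (decide (n = 0))), n) l := by
  rw [DetOneCounter.run_cons]
  exact congrArg (automaton.run · l) (Prod.ext rfl (add_zero n))

structure IsBlock (u y : List ΓN) : Prop where
  ne_nil : u ≠ []
  letters : ∀ x ∈ u, x ≠ .d
  ds : ∀ x ∈ y, x = .d
  length_le : u.length ≤ y.length

lemma IsBlock.eq_replicate {u y : List ΓN} (h : IsBlock u y) :
    ∃ k, y = List.replicate (k + 1) .d ∧ u.length ≤ k + 1 := by
  obtain ⟨k, hk⟩ :=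
    Nat.exists_eq_add_one.2 ((List.length_pos_iff.2 h.ne_nil).trans_le h.length_le)
  exact ⟨k, hk ▸ List.eq_replicate_length.2 h.ds, hk ▸ h.length_le⟩

theorem run_of_isBlock {u₁ y₁ u₂ y₂ : List ΓN} (h₁ : IsBlock u₁ y₁) (h₂ : IsBlock u₂ y₂) :
    (automaton.run ((p, .first false), 0) ((u₁ ++ y₁ ++ (u₂ ++ y₂)).map .letter ++ [.dollar])).1
      = (p, .halt (decide (imbalance p u₁ = 0)) (decide (imbalance p u₂ = 0))) := by
  obtain ⟨k, rfl, hk⟩ := h₁.eq_replicate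
  obtain ⟨l, rfl, -⟩ := h₂.eq_replicate
  obtain ⟨x, t, rfl⟩ := List.exists_cons_of_ne_nil h₂.ne_nil
  obtain ⟨pos, hrun₁, hpos⟩ := run_first p h₁.letters (signCorrect_zero false)
  rw [zero_add] at hrun₁ hpos
  have hdrain := run_drain p (decide (imbalance p u₁ = 0)) (k + 1) hpos
    ((abs_imbalance_le_length p u₁).trans (by exact_mod_cast hk))
  have hx : x ≠ .d := h₂.letters x List.mem_cons_self
  have hrun₂ := run_second p (decide (imbalance p u₁ = 0))
    (fun y hy => h₂.letters y (List.mem_cons_of_mem x hy)) (weight p x)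
  have henter : automaton.stepConfig ((p, .drain (decide (imbalance p u₁ = 0)) pos), 0) (.letter x)
      = ((p, .second (decide (imbalance p u₁ = 0))), 0 + weight p x) := by
    cases x <;> first | exact absurd rfl hx | rfl
  simp only [List.map_append, List.map_cons, List.map_replicate, List.append_assoc,
    DetOneCounter.run_append]
  rw [hrun₁, run_first_replicate_d, hdrain, automaton.run_cons _ (.letter x), henter, zero_add,
    hrun₂, List.replicate_succ, run_second_d, run_halt, run_halt, imbalance_cons]

noncomputable def startDist (s : Pair × Phase) : ℝ := if s.2 = .first false then 1 / 3 else 0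

lemma startDist_mem : startDist ∈ stdSimplex ℝ (Pair × Phase) := by
  refine ⟨fun s => by unfold startDist; split_ifs <;> norm_num, ?_⟩
  simp only [startDist, Fintype.sum_prod_type, Finset.sum_ite_eq', Finset.mem_univ, if_true,
    Pair.sum_univ]
  norm_num

noncomputable abbrev solver : LasVegas1P1CA ΓN := automaton.randomStart startDist startDist_mem

theorem solver_tsum_verdict (v : LVDec) {u₁ y₁ u₂ y₂ : List ΓN} (h₁ : IsBlock u₁ y₁)
    (h₂ : IsBlock u₂ y₂) :
    ∑' q : solver.Q × ℤ,
        (if solver.lvdec q.1 = v then solver.finalD (u₁ ++ y₁ ++ (u₂ ++ y₂)) q else 0)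
      = ∑ p : Pair, if lvVerdict (decide (imbalance p u₁ = 0)) (decide (imbalance p u₂ = 0)) = v
          then 1 / 3 else 0 := by
  rw [DetOneCounter.randomStart_tsum_verdict, Fintype.sum_prod_type]
  refine Finset.sum_congr rfl fun p _ => ?_
  rw [Finset.sum_eq_single_of_mem (Phase.first false) (Finset.mem_univ _)
    fun φ _ hφ => by simp [startDist, hφ], run_of_isBlock p h₁ h₂]
  simp [startDist]

lemma exists_isBlock_of_mem_ONE {w : List ΓN} (hw : w ∈ ONE) :
    ∃ u y, w = u ++ y ∧ IsBlock u y ∧ exactlyOne (eqAB u) (eqBC u) (eqCA u) := by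
  obtain ⟨u, y, rfl, hu, hy, hl, hone⟩ := hw
  refine ⟨u, y, rfl, ⟨?_, hu, hy, hl⟩, hone⟩
  rintro rfl
  rcases hone with ⟨-, h, -⟩ | ⟨h, -⟩ | ⟨h, -⟩ <;> exact h rfl

lemma exists_isBlock_of_mem_NONE {w : List ΓN} (hw : w ∈ NONE) :
    ∃ u y, w = u ++ y ∧ IsBlock u y ∧ ¬eqAB u ∧ ¬eqBC u ∧ ¬eqCA u := by
  obtain ⟨u, y, rfl, hu, hy, hl, hab, hbc, hca⟩ := hw
  exact ⟨u, y, rfl, ⟨by rintro rfl; exact hab rfl, hu, hy, hl⟩, hab, hbc, hca⟩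

end OneNone

/-- a Las Vegas 1P1CA solves `ONE-NONE` with success probability `1/3`. -/
theorem stmt4 : ∃ M : LasVegas1P1CA ΓN,
    (∀ w ∈ ONE * NONE, (1 : ℝ) / 3 ≤ M.accProb w ∧ M.rejProb w = 0) ∧
    (∀ w ∈ NONE * ONE, (1 : ℝ) / 3 ≤ M.rejProb w ∧ M.accProb w = 0) := by
  refine ⟨OneNone.solver, fun w hw => ?_, fun w hw => ?_⟩
  · obtain ⟨_, hw₁, _, hw₂, rfl⟩ := Language.mem_mul.1 hw
    obtain ⟨u₁, y₁, rfl, h₁, hone⟩ := OneNone.exists_isBlock_of_mem_ONE hw₁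
    obtain ⟨u₂, y₂, rfl, h₂, hab, hbc, hca⟩ := OneNone.exists_isBlock_of_mem_NONE hw₂
    simp only [LasVegas1P1CA.accProb, LasVegas1P1CA.rejProb,
      OneNone.solver_tsum_verdict _ h₁ h₂, OneNone.Pair.sum_univ]
    rcases hone with ⟨_, _, _⟩ | ⟨_, _, _⟩ | ⟨_, _, _⟩ <;>
      simp [OneNone.imbalance_eq_zero_iff, OneNone.Pair.Holds, OneNone.lvVerdict, *]
  · obtain ⟨_, hw₁, _, hw₂, rfl⟩ := Language.mem_mul.1 hw
    obtain ⟨u₁, y₁, rfl, h₁, hab, hbc, hca⟩ := OneNone.exists_isBlock_of_mem_NONE hw₁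
    obtain ⟨u₂, y₂, rfl, h₂, hone⟩ := OneNone.exists_isBlock_of_mem_ONE hw₂
    simp only [LasVegas1P1CA.accProb, LasVegas1P1CA.rejProb,
      OneNone.solver_tsum_verdict _ h₁ h₂, OneNone.Pair.sum_univ]
    rcases hone with ⟨_, _, _⟩ | ⟨_, _, _⟩ | ⟨_, _, _⟩ <;>
      simp [OneNone.imbalance_eq_zero_iff, OneNone.Pair.Holds, OneNone.lvVerdict, *]
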